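/- Let $\xi : (0,\infty) \to \mathbb{R}$ be twice continuously differentiable with $(\sinh(2z)\,\xi'(z))' = 0$ for all $z > 0$. Then $\int_0^\infty \sinh(2z)\,\xi(z)^2\,dz < \infty$ if and only if $\xi$ is a constant multiple of $\log(\tanh z)$. -/

import Mathlib

open Set Real MeasureTheory Filter Topology

private lemma tanh_pos' {z : ℝ} (hz : 0 < z) : 0 < Real.tanh z := by
  rw [Real.tanh_eq_sinh_div_cosh]
  exact div_pos (Real.sinh_pos_iff.mpr hz) (Real.cosh_pos z)

private lemma tanh_lt_one' (z : ℝ) : Real.tanh z < 1 := by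
  rw [Real.tanh_eq_sinh_div_cosh, div_lt_one (Real.cosh_pos z)]
  nlinarith [Real.cosh_sub_sinh z, Real.exp_pos (-z)]

private lemma hasDerivAt_log_tanh {z : ℝ} (hz : 0 < z) :
    HasDerivAt (fun t => Real.log (Real.tanh t)) (2 / Real.sinh (2*z)) z := by
  have hc : 0 < Real.cosh z := Real.cosh_pos z
  have hs : 0 < Real.sinh z := Real.sinh_pos_iff.mpr hz
  have hfun : Real.tanh = fun y => Real.sinh y / Real.cosh y :=
    funext fun y => Real.tanh_eq_sinh_div_cosh y
  have htanh : HasDerivAt Real.tanh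
      ((Real.cosh z * Real.cosh z - Real.sinh z * Real.sinh z) / Real.cosh z ^ 2) z := by
    rw [hfun]
    exact (Real.hasDerivAt_sinh z).div (Real.hasDerivAt_cosh z) hc.ne'
  have hlog := htanh.log (ne_of_gt (tanh_pos' hz))
  convert hlog using 1
  rw [Real.sinh_two_mul, Real.tanh_eq_sinh_div_cosh]
  have h1 : Real.cosh z ^ 2 - Real.sinh z ^ 2 = 1 := Real.cosh_sq_sub_sinh_sq z
  field_simp
  linear_combination (-1:ℝ) * h1

private lemma const_of_hasDerivAt_zero' {f : ℝ → ℝ} (hf : ∀ z ∈ Ioi (0:ℝ), HasDerivAt f 0 z)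
    {x y : ℝ} (hx : x ∈ Ioi (0:ℝ)) (hy : y ∈ Ioi (0:ℝ)) : f x = f y := by
  refine (convex_Ioi (0:ℝ)).is_const_of_fderivWithin_eq_zero
    (fun z hz => ((hf z hz).differentiableAt).differentiableWithinAt) (fun z hz => ?_) hx hy
  rw [fderivWithin_of_isOpen isOpen_Ioi hz, (hf z hz).hasFDerivAt.fderiv]
  ext t
  simp

-- |log(tanh z)| ≤ exp(-z)/sinh z for z > 0
private lemma neg_log_tanh_le {z : ℝ} (hz : 0 < z) :
    -Real.log (Real.tanh z) ≤ Real.exp (-z) / Real.sinh z := by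
  have hs : 0 < Real.sinh z := Real.sinh_pos_iff.mpr hz
  have hc : 0 < Real.cosh z := Real.cosh_pos z
  have h1 : -Real.log (Real.tanh z) = Real.log (Real.cosh z / Real.sinh z) := by
    rw [← Real.log_inv, Real.tanh_eq_sinh_div_cosh, inv_div]
  rw [h1]
  have h2 := Real.log_le_sub_one_of_pos (div_pos hc hs)
  have h3 : Real.cosh z / Real.sinh z - 1 = Real.exp (-z) / Real.sinh z := by
    rw [← Real.cosh_sub_sinh]
    field_simp
  linarith

-- the weighted square of log tanh, integrable on (0,∞)
private lemma integrable_H :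
    IntegrableOn (fun z => Real.sinh (2*z) * Real.log (Real.tanh z) ^ 2) (Ioi (0:ℝ)) := by
  set H : ℝ → ℝ := fun z => Real.sinh (2*z) * Real.log (Real.tanh z) ^ 2 with hHdef
  have htanh_cont : Continuous Real.tanh := by
    rw [funext fun y => Real.tanh_eq_sinh_div_cosh y]
    exact Real.continuous_sinh.div Real.continuous_cosh fun x => (Real.cosh_pos x).ne'
  have hcont : ContinuousOn H (Ioi 0) := by
    apply ContinuousOn.mul
    · exact (Real.continuous_sinh.comp (continuous_const.mul continuous_id)).continuousOn
    · refine ContinuousOn.pow ?_ 2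
      exact fun z hz => (Real.continuousAt_log (ne_of_gt (tanh_pos' hz))).comp
        htanh_cont.continuousAt |>.continuousWithinAt
  rw [← Ioc_union_Ioi_eq_Ioi (zero_le_one (α := ℝ))]
  apply IntegrableOn.union
  · -- on (0, 1]
    have hdom : IntegrableOn (fun z : ℝ => 100 * z ^ (-(1/2) : ℝ)) (Ioc (0:ℝ) 1) := by
      have := (intervalIntegrable_iff_integrableOn_Ioc_of_le
        (zero_le_one (α := ℝ))).mp (intervalIntegral.intervalIntegrable_rpow' (r := (-(1/2):ℝ)) (by norm_num))
      exact this.const_mul 100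
    refine hdom.mono' ((hcont.mono Ioc_subset_Ioi_self).aestronglyMeasurable measurableSet_Ioc) ?_
    refine (ae_restrict_iff' measurableSet_Ioc).mpr (ae_of_all _ fun z hz => ?_)
    obtain ⟨hz0, hz1⟩ := hz
    have ht0 : 0 < Real.tanh z := tanh_pos' hz0
    have hlogneg : Real.log (Real.tanh z) < 0 := Real.log_neg ht0 (tanh_lt_one' z)
    have hc : 0 < Real.cosh z := Real.cosh_pos z
    have hcosh2 : Real.cosh z ≤ 2 := by
      have h1 : Real.cosh z ≤ Real.cosh 1 := by
        rw [Real.cosh_le_cosh]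
        rw [abs_of_pos hz0, abs_of_pos one_pos]
        exact hz1
      have h2 : Real.cosh 1 < 2 := by
        rw [Real.cosh_eq]
        have := Real.exp_one_lt_d9
        have h3 : Real.exp (-1) < 1 := by
          rw [Real.exp_lt_one_iff]; norm_num
        linarith
      linarith
    have hlow : z / 2 ≤ Real.tanh z := by
      rw [Real.tanh_eq_sinh_div_cosh, div_le_div_iff₀ two_pos hc]
      have hs : z ≤ Real.sinh z := Real.self_le_sinh_iff.mpr hz0.le
      nlinarith [Real.sinh_pos_iff.mpr hz0]
    have hrp : (0:ℝ) < z ^ (-(1/4) : ℝ) := Real.rpow_pos_of_pos hz0 _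
    have hlogbound : -Real.log (Real.tanh z) ≤ 5 * z ^ (-(1/4) : ℝ) := by
      have h1 : Real.log (z/2) ≤ Real.log (Real.tanh z) :=
        Real.log_le_log (by linarith) hlow
      have h2 : Real.log (z/2) = Real.log z - Real.log 2 :=
        Real.log_div hz0.ne' two_ne_zero
      have h3 : Real.log 2 ≤ 1 := by linarith [Real.log_le_sub_one_of_pos (two_pos (α := ℝ))]
      have h4 : -(1/4) * Real.log z ≤ z ^ (-(1/4):ℝ) - 1 := by
        rw [← Real.log_rpow hz0]
        exact Real.log_le_sub_one_of_pos hrp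
      have h5 : (1:ℝ) ≤ z ^ (-(1/4):ℝ) :=
        Real.one_le_rpow_of_pos_of_le_one_of_nonpos hz0 hz1 (by norm_num)
      nlinarith
    have hsqid : (z ^ (-(1/4):ℝ)) ^ 2 = z ^ (-(1/2):ℝ) := by
      rw [← Real.rpow_natCast (z ^ (-(1/4):ℝ)) 2, ← Real.rpow_mul hz0.le]
      norm_num
    have hsq : Real.log (Real.tanh z) ^ 2 ≤ 25 * z ^ (-(1/2):ℝ) := by
      have := sq_le_sq' (by linarith : -(5 * z ^ (-(1/4):ℝ)) ≤ Real.log (Real.tanh z))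
        (by nlinarith : Real.log (Real.tanh z) ≤ 5 * z ^ (-(1/4):ℝ))
      calc Real.log (Real.tanh z) ^ 2 ≤ (5 * z ^ (-(1/4):ℝ)) ^ 2 := this
        _ = 25 * z ^ (-(1/2):ℝ) := by rw [mul_pow, hsqid]; norm_num
    have hsinh4 : Real.sinh (2*z) ≤ 4 := by
      have h1 : Real.sinh (2*z) ≤ Real.sinh 2 := Real.sinh_le_sinh.mpr (by linarith)
      have h2 : Real.sinh 2 < 4 := by
        rw [Real.sinh_eq]
        have h3 : Real.exp 2 < 8 := by
          rw [show (2:ℝ) = 1 + 1 by norm_num, Real.exp_add]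
          nlinarith [Real.exp_one_lt_d9, Real.exp_pos 1]
        nlinarith [Real.exp_pos (-2)]
      linarith
    have hsinhpos : 0 < Real.sinh (2*z) := Real.sinh_pos_iff.mpr (by linarith)
    have hnn : 0 ≤ H z := by positivity
    rw [Real.norm_eq_abs, abs_of_nonneg hnn]
    calc H z ≤ 4 * (25 * z ^ (-(1/2):ℝ)) := by
          apply mul_le_mul hsinh4 hsq (sq_nonneg _) (by norm_num)
      _ = 100 * z ^ (-(1/2):ℝ) := by ring
  · -- on (1, ∞)
    have hdom : IntegrableOn (fun z : ℝ => (2 / Real.sinh 1) * Real.exp (-1 * z)) (Ioi (1:ℝ)) :=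
      (exp_neg_integrableOn_Ioi 1 one_pos).const_mul _
    refine hdom.mono' ((hcont.mono (Ioi_subset_Ioi zero_le_one)).aestronglyMeasurable
      measurableSet_Ioi) ?_
    refine (ae_restrict_iff' measurableSet_Ioi).mpr (ae_of_all _ fun z hz => ?_)
    have hz1 : 1 < z := hz
    have hz0 : 0 < z := by linarith
    have hs : 0 < Real.sinh z := Real.sinh_pos_iff.mpr hz0
    have hs1 : 0 < Real.sinh 1 := Real.sinh_pos_iff.mpr one_pos
    have hs1s : Real.sinh 1 ≤ Real.sinh z := Real.sinh_le_sinh.mpr hz1.le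
    have hc : 0 < Real.cosh z := Real.cosh_pos z
    have ha : 0 < Real.exp (-z) := Real.exp_pos _
    have hlogneg : Real.log (Real.tanh z) < 0 := Real.log_neg (tanh_pos' hz0) (tanh_lt_one' z)
    have h1 := neg_log_tanh_le hz0
    have hsq : Real.log (Real.tanh z) ^ 2 ≤ (Real.exp (-z) / Real.sinh z) ^ 2 := by
      apply sq_le_sq' (by linarith)
      have : 0 ≤ Real.exp (-z) / Real.sinh z := by positivity
      linarith
    have hca : Real.cosh z * Real.exp (-z) ≤ 1 := by
      have hce : Real.cosh z ≤ Real.exp z := by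
        rw [Real.cosh_eq]
        nlinarith [Real.exp_pos (-z), Real.exp_pos z,
          (Real.exp_le_exp.mpr (by linarith : -z ≤ z))]
      calc Real.cosh z * Real.exp (-z) ≤ Real.exp z * Real.exp (-z) :=
            mul_le_mul_of_nonneg_right hce ha.le
        _ = 1 := by rw [← Real.exp_add]; simp
    have hsinhpos : 0 < Real.sinh (2*z) := Real.sinh_pos_iff.mpr (by linarith)
    have hnn : 0 ≤ H z := by positivity
    rw [Real.norm_eq_abs, abs_of_nonneg hnn]
    have key : Real.sinh (2*z) * (Real.exp (-z) / Real.sinh z) ^ 2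
        = 2 * (Real.cosh z * Real.exp (-z)) * (Real.exp (-z) / Real.sinh z) := by
      rw [Real.sinh_two_mul]
      field_simp
    calc H z ≤ Real.sinh (2*z) * (Real.exp (-z) / Real.sinh z) ^ 2 :=
          mul_le_mul_of_nonneg_left hsq hsinhpos.le
      _ = 2 * (Real.cosh z * Real.exp (-z)) * (Real.exp (-z) / Real.sinh z) := key
      _ ≤ 2 * 1 * (Real.exp (-z) / Real.sinh z) := by
          apply mul_le_mul_of_nonneg_right (by linarith) (by positivity)
      _ ≤ 2 * (Real.exp (-z) / Real.sinh 1) := by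
          rw [mul_one]
          exact mul_le_mul_of_nonneg_left
            (div_le_div_of_nonneg_left ha.le hs1 hs1s) two_pos.le
      _ = (2 / Real.sinh 1) * Real.exp (-1 * z) := by rw [neg_one_mul]; ring

/-- Limit-point at infinity for the Salam-Sezgin problem: a C² zero mode of
`-(sinh(2z) ξ')' = 0` on `(0,∞)` is square-integrable with respect to `sinh(2z) dz`
iff it is a constant multiple of `log(tanh z)`. -/
theorem salamSezgin_normalisable_zero_mode
    (ξ : ℝ → ℝ) (hξ : ContDiffOn ℝ 2 ξ (Ioi 0))
    (hode : ∀ z > (0:ℝ), HasDerivAt (fun t => Real.sinh (2*t) * deriv ξ t) 0 z) :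
    IntegrableOn (fun z => Real.sinh (2*z) * ξ z ^ 2) (Ioi 0) ↔
      ∃ c : ℝ, ∀ z > (0:ℝ), ξ z = c * Real.log (Real.tanh z) := by
  have hdiff : ∀ z ∈ Ioi (0:ℝ), HasDerivAt ξ (deriv ξ z) z := by
    intro z hz
    have h1 : DifferentiableOn ℝ ξ (Ioi 0) := hξ.differentiableOn (by norm_num)
    exact ((h1 z hz).differentiableAt (isOpen_Ioi.mem_nhds hz)).hasDerivAt
  set b : ℝ := Real.sinh (2*1) * deriv ξ 1 with hb
  have hconst : ∀ z ∈ Ioi (0:ℝ), Real.sinh (2*z) * deriv ξ z = b := fun z hz =>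
    const_of_hasDerivAt_zero' (f := fun t => Real.sinh (2*t) * deriv ξ t)
      (fun w hw => hode w hw) hz (by norm_num : (1:ℝ) ∈ Ioi 0)
  have hg : ∀ z ∈ Ioi (0:ℝ),
      HasDerivAt (fun t => ξ t - b/2 * Real.log (Real.tanh t)) 0 z := by
    intro z hz
    have hz0 : (0:ℝ) < z := hz
    have hsp : 0 < Real.sinh (2*z) := Real.sinh_pos_iff.mpr (by linarith)
    have h1 := (hdiff z hz).sub ((hasDerivAt_log_tanh hz0).const_mul (b/2))
    have h2 : deriv ξ z = b / Real.sinh (2*z) := by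
      rw [eq_div_iff hsp.ne', mul_comm]
      exact hconst z hz
    refine h1.congr_deriv ?_
    rw [h2]
    field_simp
    ring
  set a : ℝ := ξ 1 - b/2 * Real.log (Real.tanh 1) with ha
  have hrep : ∀ z ∈ Ioi (0:ℝ), ξ z = a + b/2 * Real.log (Real.tanh z) := by
    intro z hz
    have := const_of_hasDerivAt_zero' hg hz (by norm_num : (1:ℝ) ∈ Ioi 0)
    linarith [this]
  constructor
  · intro hint
    -- show a = 0
    have ha0 : a = 0 := by
      by_contra hane
      have habs : 0 < |a| / 2 := by positivity
      have hs1 : 0 < Real.sinh 1 := Real.sinh_pos_iff.mpr one_pos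
      have hT : Tendsto (fun z : ℝ => |b/2| * (Real.exp (-z) / Real.sinh 1)) atTop (𝓝 0) := by
        have := (Real.tendsto_exp_neg_atTop_nhds_zero.div_const (Real.sinh 1)).const_mul |b/2|
        simpa using this
      have hev : ∀ᶠ z in atTop,
          |b/2| * (Real.exp (-z) / Real.sinh 1) < |a| / 2 := hT.eventually_lt_const habs
      obtain ⟨Z, hZ⟩ := eventually_atTop.mp (hev.and (eventually_ge_atTop (1:ℝ)))
      set Z' : ℝ := max Z 1 with hZ'
      have hZ'1 : (1:ℝ) ≤ Z' := le_max_right _ _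
      have hbound : ∀ z ∈ Ioi Z', a^2/2 ≤ Real.sinh (2*z) * ξ z ^ 2 := by
        intro z hz
        have hzZ : Z' < z := hz
        have hz1 : 1 ≤ z := le_trans hZ'1 hzZ.le
        have hz0 : 0 < z := by linarith
        obtain ⟨hZsmall, _⟩ := hZ z (le_trans (le_max_left _ _) hzZ.le)
        have hs : 0 < Real.sinh z := Real.sinh_pos_iff.mpr hz0
        have hlt : |b/2 * Real.log (Real.tanh z)| < |a| / 2 := by
          have hlog : |Real.log (Real.tanh z)| ≤ Real.exp (-z) / Real.sinh 1 := by
            have h1 := neg_log_tanh_le hz0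
            have h2 : Real.log (Real.tanh z) < 0 :=
              Real.log_neg (tanh_pos' hz0) (tanh_lt_one' z)
            rw [abs_of_neg h2]
            calc -Real.log (Real.tanh z) ≤ Real.exp (-z) / Real.sinh z := h1
              _ ≤ Real.exp (-z) / Real.sinh 1 :=
                div_le_div_of_nonneg_left (Real.exp_pos _).le hs1
                  (Real.sinh_le_sinh.mpr hz1)
          calc |b/2 * Real.log (Real.tanh z)| = |b/2| * |Real.log (Real.tanh z)| :=
                abs_mul _ _
            _ ≤ |b/2| * (Real.exp (-z) / Real.sinh 1) :=
                mul_le_mul_of_nonneg_left hlog (abs_nonneg _)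
            _ < |a| / 2 := hZsmall
        have hxi : |a| / 2 ≤ |ξ z| := by
          rw [hrep z hz0]
          have h3 := abs_sub_abs_le_abs_sub a (-(b/2 * Real.log (Real.tanh z)))
          rw [abs_neg, sub_neg_eq_add] at h3
          linarith
        have hsq : a^2/4 ≤ ξ z ^ 2 := by
          have h1 : (|a|/2)^2 ≤ |ξ z|^2 := by
            apply pow_le_pow_left₀ (by positivity) hxi
          have h2 : (|a|/2)^2 = a^2/4 := by rw [div_pow, sq_abs]; norm_num
          rw [sq_abs] at h1
          linarith
        have hsinh : 2 ≤ Real.sinh (2*z) := by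
          have h1 : 2*z ≤ Real.sinh (2*z) := Real.self_le_sinh_iff.mpr (by linarith)
          linarith
        nlinarith [sq_nonneg (ξ z)]
      have hKint : IntegrableOn (fun _ : ℝ => a^2/2) (Ioi Z') := by
        refine Integrable.mono' (hint.mono_set (Ioi_subset_Ioi (by linarith : (0:ℝ) ≤ Z')))
          aestronglyMeasurable_const ?_
        refine (ae_restrict_iff' measurableSet_Ioi).mpr (ae_of_all _ fun z hz => ?_)
        rw [Real.norm_eq_abs, abs_of_nonneg (by positivity)]
        exact hbound z hz
      rcases (integrableOn_const_iff).mp hKint with h | h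
      · rw [enorm_eq_zero, div_eq_zero_iff] at h
        rcases h with h | h
        · exact hane (pow_eq_zero_iff two_ne_zero |>.mp h)
        · norm_num at h
      · rw [Real.volume_Ioi] at h
        exact absurd h (by simp)
    refine ⟨b/2, fun z hz => ?_⟩
    rw [hrep z hz, ha0, zero_add]
  · rintro ⟨c, hc⟩
    have h1 : IntegrableOn
        (fun z => c^2 * (Real.sinh (2*z) * Real.log (Real.tanh z) ^ 2)) (Ioi (0:ℝ)) :=
      integrable_H.const_mul (c^2)
    refine h1.congr_fun (fun z hz => ?_) measurableSet_Ioi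
    rw [hc z hz]
    ring
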